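/- Let R be a commutative Noetherian ring and F : 0 → F_b → ⋯ → F_a → 0 a finite free R-complex with differentials ∂_n. For every integer n with a ≤ n ≤ b one has dim(R/I_{s_n}(∂_{n+1})) ≤ dim_R F + n, where s_n = Σ_{i ≤ n} (−1)^{n−i} rank_R F_i. -/

import Mathlib

open Matrix

/-- Convert a Krull-dimension value (in `WithBot ℕ∞`) to an extended real. -/
noncomputable def krullDimToEReal (d : WithBot ℕ∞) : EReal :=
  WithBot.recBotCoe ⊥ (fun d' => WithTop.recTopCoe ⊤ (fun m : ℕ => ((m : ℝ) : EReal)) d') d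

/-- Krull dimension of a ring, as an extended real. -/
noncomputable def ringDimE (R : Type) [CommRing R] : EReal := krullDimToEReal (ringKrullDim R)

/-- Krull dimension of a module: the dimension of `R ⧸ ann M`, `-∞` for the zero module. -/
noncomputable def moduleDimE (R : Type) [CommRing R] (M : Type) [AddCommGroup M] [Module R M] :
    EReal :=
  krullDimToEReal (ringKrullDim (R ⧸ Module.annihilator R M))

/-- A finite free complex `F : 0 → F_b → ⋯ → F_a → 0`, encoded by the ranks of the `F_i`
and the matrices of the differentials: `d n` is the matrix of `∂_{n+1} : F_{n+1} → F_n`. -/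
structure FinFreeComplex (R : Type) [CommRing R] where
  a : ℤ
  b : ℤ
  rank : ℤ → ℕ
  d : ∀ n : ℤ, Matrix (Fin (rank n)) (Fin (rank (n + 1))) R
  rank_eq_zero : ∀ n : ℤ, n < a ∨ b < n → rank n = 0
  d_comp_d : ∀ n : ℤ, d n * d (n + 1) = 0

namespace FinFreeComplex

variable {R : Type} [CommRing R] (F : FinFreeComplex R)

/-- The `n`-th homology of `F`: `ker ∂_n / im ∂_{n+1}`. -/
abbrev homologyAt (n : ℤ) : Type :=
  ↥(LinearMap.ker (F.d (n - 1)).mulVecLin) ⧸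
    (LinearMap.range (F.d (n - 1 + 1)).mulVecLin).comap
      (LinearMap.ker (F.d (n - 1)).mulVecLin).subtype

/-- Foxby's Krull dimension of the complex `F`: `sup { dim H_n(F) - n }`. -/
noncomputable def dim : EReal :=
  ⨆ n : ℤ, (moduleDimE R (F.homologyAt n) - ((n : ℝ) : EReal))

/-- `s_n = Σ_{i ≤ n} (-1)^{n-i} rank F_i`. -/
noncomputable def s (n : ℤ) : ℤ := ∑ᶠ i ∈ Set.Iic n, (-1 : ℤ) ^ (n - i).toNat * (F.rank i : ℤ)

end FinFreeComplex

/-- The ideal of `s × s` minors of a matrix, with the conventions that it is the unit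
ideal when `s ≤ 0` or when the matrix is empty (`0 × 0`), and that an `s × s` minor of a
nonempty matrix is `0` when `s` exceeds the number of rows or columns. -/
noncomputable def minorsIdeal {R : Type} [CommRing R] {p q : ℕ} (A : Matrix (Fin p) (Fin q) R)
    (s : ℤ) : Ideal R :=
  if s ≤ 0 then ⊤
  else if p = 0 ∧ q = 0 then ⊤
  else Ideal.span {x : R | ∃ (f : Fin s.toNat → Fin p) (g : Fin s.toNat → Fin q),
    Function.Injective f ∧ Function.Injective g ∧ x = (A.submatrix f g).det}

/-!
Let `P` be a prime containing `I_{s_n}(∂_{n+1})`. If no `H_m(F)` with `m ≤ n` had its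
annihilator inside `P`, then some element outside `P` would kill each of them, so the localized
complex `F_P` would be exact in all degrees `≤ n`. Over the local ring `R_P`, exactness from the
bottom up makes every image `im ∂_{k+1} ⊆ F_k` (`k ≤ n`) a free direct summand of rank `s_k`:
it is the kernel of `∂_k`, split off by the projective module `im ∂_k` of rank `s_{k-1}`.
A free summand of rank `s_n` yields matrices with `V ∂_{n+1} U = 1`, and expanding
`det (V ∂_{n+1} U)` by Cauchy–Binet puts `1` into `I_{s_n}(∂_{n+1}) R_P ⊆ P R_P`, which is absurd.
Hence every chain of primes above `I_{s_n}(∂_{n+1})` lies above `ann H_m(F)` for some `m ≤ n`,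
and `dim R/I_{s_n}(∂_{n+1}) ≤ dim H_m(F) ≤ dim F + m ≤ dim F + n`.
-/

lemma krullDimToEReal_le_iff {x : WithBot ℕ∞} {y : EReal} :
    krullDimToEReal x ≤ y ↔ ∀ k : ℕ, (k : WithBot ℕ∞) ≤ x → ((k : ℝ) : EReal) ≤ y := by
  induction x using WithBot.recBotCoe with
  | bot => simp [krullDimToEReal]
  | coe x =>
    induction x using ENat.recTopCoe with
    | top =>
      refine ⟨fun h k _ => le_top.trans h, fun h => ?_⟩
      refine top_le_iff.mpr ((EReal.eq_top_iff_forall_lt y).mpr fun r => ?_)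
      obtain ⟨k, hk⟩ := exists_nat_gt r
      exact (EReal.coe_lt_coe_iff.mpr hk).trans_le (h k le_top)
    | coe m =>
      refine ⟨fun h k hk => le_trans ?_ h, fun h => h m le_rfl⟩
      exact EReal.coe_le_coe_iff.mpr (by exact_mod_cast hk)

lemma krullDimToEReal_ringKrullDim_quotient_le {R : Type*} [CommRing R] {I : Ideal R} {y : EReal}
    (h : ∀ p : PrimeSpectrum R, I ≤ p.asIdeal →
      ∃ J ≤ p.asIdeal, krullDimToEReal (ringKrullDim (R ⧸ J)) ≤ y) :
    krullDimToEReal (ringKrullDim (R ⧸ I)) ≤ y := by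
  rw [krullDimToEReal_le_iff]
  intro k hk
  rw [ringKrullDim_quotient, Order.le_krullDim_iff] at hk
  obtain ⟨l, rfl⟩ := hk
  obtain ⟨J, hJ, hy⟩ := h l.head.1 ((PrimeSpectrum.mem_zeroLocus _ _).mp l.head.2)
  refine krullDimToEReal_le_iff.mp hy l.length ?_
  let l' : LTSeries (PrimeSpectrum.zeroLocus (R := R) J) :=
    ⟨l.length, fun i => ⟨(l i).1, (PrimeSpectrum.mem_zeroLocus _ _).mpr
      (hJ.trans ((PrimeSpectrum.asIdeal_le_asIdeal _ _).mpr (l.head_le i)))⟩, fun i => l.step i⟩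
  rw [ringKrullDim_quotient]
  exact Order.LTSeries.length_le_krullDim l'

lemma Submodule.smul_mem_of_mem_annihilator_quotient {R M : Type*} [CommRing R] [AddCommGroup M]
    [Module R M] {K W : Submodule R M} {t : R}
    (ht : t ∈ Module.annihilator R (K ⧸ W.comap K.subtype)) {y : M} (hy : y ∈ K) : t • y ∈ W := by
  have := Module.mem_annihilator.mp ht (Submodule.Quotient.mk ⟨y, hy⟩)
  rwa [← Submodule.Quotient.mk_smul, Submodule.Quotient.mk_eq_zero] at this

lemma RingHom.comp_mulVec {R S m n : Type*} [CommRing R] [CommRing S] [Fintype n] (f : R →+* S)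
    (B : Matrix m n R) (y : n → R) : f ∘ (B *ᵥ y) = B.map f *ᵥ (f ∘ y) :=
  funext (f.map_mulVec B y)

section Localization

variable {R A : Type*} [CommRing R] [CommRing A] [Algebra R A] (S : Submonoid R)
  [IsLocalization S A]

lemma IsLocalization.exists_smul_eq_zero_of_comp_eq_zero {ι : Type*} [Fintype ι] {v : ι → R}
    (hv : algebraMap R A ∘ v = 0) : ∃ c ∈ S, c • v = 0 := by
  classical
  choose c hc using fun i => (IsLocalization.map_eq_zero_iff S A (v i)).mp (congrFun hv i)
  refine ⟨∏ i, (c i : R), prod_mem fun i _ => (c i).2, funext fun i => ?_⟩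
  rw [Pi.smul_apply, smul_eq_mul, ← Finset.prod_erase_mul _ _ (Finset.mem_univ i), mul_assoc,
    hc i, mul_zero, Pi.zero_apply]

lemma IsLocalization.ker_mulVecLin_map_le_range {p q r : ℕ} (B : Matrix (Fin r) (Fin q) R)
    (C : Matrix (Fin q) (Fin p) R) {t : R} (ht : t ∈ S)
    (h : ∀ y ∈ LinearMap.ker B.mulVecLin, t • y ∈ LinearMap.range C.mulVecLin) :
    LinearMap.ker (B.map (algebraMap R A)).mulVecLin ≤
      LinearMap.range (C.map (algebraMap R A)).mulVecLin := by
  intro x hx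
  rw [LinearMap.mem_ker, Matrix.mulVecLin_apply] at hx
  obtain ⟨b, hb⟩ := IsLocalization.exist_integer_multiples_of_finite S x
  choose y hy using hb
  have hyx : algebraMap R A ∘ y = (b : R) • x := funext hy
  obtain ⟨c, hc, hcy⟩ := exists_smul_eq_zero_of_comp_eq_zero (A := A) S (v := B *ᵥ y) (by
    rw [RingHom.comp_mulVec, hyx, Matrix.mulVec_smul, hx, smul_zero])
  obtain ⟨z, hz⟩ := h (c • y) (by
    rw [LinearMap.mem_ker, Matrix.mulVecLin_apply, Matrix.mulVec_smul, hcy])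
  rw [Matrix.mulVecLin_apply] at hz
  obtain ⟨u, hu⟩ := IsLocalization.map_units A ⟨t * c * b, mul_mem (mul_mem ht hc) b.2⟩
  have hCz : algebraMap R A ∘ (C *ᵥ z) = (u : A) • x := by
    rw [hz, hu]
    ext i
    simp [hy, Algebra.smul_def, mul_assoc]
  refine ⟨(↑u⁻¹ : A) • (algebraMap R A ∘ z), ?_⟩
  rw [Matrix.mulVecLin_apply, Matrix.mulVec_smul, ← RingHom.comp_mulVec, hCz, smul_smul,
    Units.inv_mul, one_smul]

end Localization

section Complements

open LinearMap Module

variable {R M N : Type*} [CommRing R] [AddCommGroup M] [Module R M] [AddCommGroup N] [Module R N]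

lemma Submodule.projective_of_isCompl [Projective R M] {p q : Submodule R M} (h : IsCompl p q) :
    Projective R p :=
  .of_split p.subtype (p.projectionOnto q h) (LinearMap.ext (Submodule.projectionOnto_apply_left h))

lemma Submodule.finite_of_isCompl [Module.Finite R M] {p q : Submodule R M} (h : IsCompl p q) :
    Module.Finite R p :=
  .equiv (Submodule.quotientEquivOfIsCompl q p h.symm)

lemma LinearMap.exists_isCompl_ker (f : M →ₗ[R] N) [Projective R (range f)] :
    ∃ C : Submodule R M, IsCompl C (ker f) := by
  obtain ⟨l, hl⟩ := f.rangeRestrict.exists_rightInverse_of_surjective f.range_rangeRestrict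
  have hidem : IsIdempotentElem (l ∘ₗ f.rangeRestrict) := by
    change (l ∘ₗ f.rangeRestrict) ∘ₗ (l ∘ₗ f.rangeRestrict) = l ∘ₗ f.rangeRestrict
    rw [LinearMap.comp_assoc, ← LinearMap.comp_assoc f.rangeRestrict, hl, LinearMap.id_comp]
  have hker : ker (l ∘ₗ f.rangeRestrict) = ker f := by
    rw [ker_comp_of_ker_eq_bot _ (ker_eq_bot_of_inverse hl), ker_rangeRestrict]
  exact ⟨_, hker ▸ hidem.isCompl⟩

attribute [local instance] Module.free_of_flat_of_isLocalRing

variable [IsLocalRing R]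

lemma Submodule.finrank_add_finrank_of_isCompl [Module.Finite R M] [Projective R M]
    {p q : Submodule R M} (h : IsCompl p q) : finrank R p + finrank R q = finrank R M := by
  have := projective_of_isCompl h
  have := projective_of_isCompl h.symm
  have := finite_of_isCompl h
  have := finite_of_isCompl h.symm
  rw [← Module.finrank_prod, (Submodule.prodEquivOfIsCompl p q h).finrank_eq]

lemma LinearMap.finrank_ker_add_finrank_range [Module.Finite R M] [Projective R M]
    (f : M →ₗ[R] N) [Projective R (range f)] :
    finrank R (ker f) + finrank R (range f) = finrank R M := by
  obtain ⟨C, hC⟩ := f.exists_isCompl_ker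
  rw [← (f.kerComplementEquivRange hC).finrank_eq, add_comm,
    Submodule.finrank_add_finrank_of_isCompl hC]

end Complements

lemma Matrix.exists_mul_mul_eq_one_of_isCompl {R : Type*} [CommRing R] [StrongRankCondition R]
    {k p q : ℕ} (B : Matrix (Fin p) (Fin q) R) {W : Submodule R (Fin p → R)}
    (hW : IsCompl (LinearMap.range B.mulVecLin) W) [Module.Free R (LinearMap.range B.mulVecLin)]
    (hk : Module.finrank R (LinearMap.range B.mulVecLin) = k) :
    ∃ (V : Matrix (Fin k) (Fin p) R) (U : Matrix (Fin q) (Fin k) R), V * B * U = 1 := by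
  let b := Module.finBasisOfFinrankEq R _ hk
  choose u hu using fun i => (b i).2
  let v := b.equivFun.toLinearMap ∘ₗ Submodule.projectionOnto _ W hW
  refine ⟨LinearMap.toMatrix' v, (Matrix.of u)ᵀ, ?_⟩
  refine Matrix.ext_of_mulVec_single fun j => ?_
  have hcol : B *ᵥ ((Matrix.of u)ᵀ *ᵥ Pi.single j 1) = b j := by
    rw [Matrix.mulVec_single_one]
    exact hu j
  have hv : v (b j) = Pi.single j 1 := by
    simp [v, Submodule.projectionOnto_apply_left, Finsupp.single_eq_pi_single]
  rw [← Matrix.mulVec_mulVec, ← Matrix.mulVec_mulVec, hcol, LinearMap.toMatrix'_mulVec, hv,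
    Matrix.one_mulVec]

lemma Matrix.det_mul_eq_sum {R m : Type*} [CommRing R] [Fintype m] {s : ℕ}
    (P : Matrix (Fin s) m R) (Q : Matrix m (Fin s) R) :
    (P * Q).det = ∑ f : Fin s → m, (∏ i, P i (f i)) * (Q.submatrix f id).det := by
  have hrows : P * Q = Matrix.of fun i => ∑ j, P i j • Q j := by
    ext i k
    simp [Matrix.mul_apply, Finset.sum_apply]
  rw [hrows]
  refine (Matrix.detRowAlternating.toMultilinearMap.map_sum fun i j => P i j • Q j).trans
    (Finset.sum_congr rfl fun f _ => ?_)
  exact (Matrix.detRowAlternating.toMultilinearMap.map_smul_univ _ _).trans (smul_eq_mul _ _)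

lemma Matrix.det_mul_mem_span_det_submatrix {R m : Type*} [CommRing R] [Fintype m] {s : ℕ}
    (P : Matrix (Fin s) m R) (Q : Matrix m (Fin s) R) :
    (P * Q).det ∈ Ideal.span (Set.range fun f : Fin s → m => (Q.submatrix f id).det) := by
  rw [Matrix.det_mul_eq_sum]
  exact Ideal.sum_mem _ fun f _ => Ideal.mul_mem_left _ _ (Ideal.subset_span ⟨f, rfl⟩)

section Minors

variable {R : Type} [CommRing R]

lemma det_submatrix_mem_minorsIdeal {p q : ℕ} (A : Matrix (Fin p) (Fin q) R) {s : ℤ}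
    (hs : 0 < s) (f : Fin s.toNat → Fin p) (g : Fin s.toNat → Fin q) :
    (A.submatrix f g).det ∈ minorsIdeal A s := by
  rw [minorsIdeal, if_neg hs.not_ge]
  split_ifs
  · exact Submodule.mem_top
  by_cases hf : Function.Injective f
  · by_cases hg : Function.Injective g
    · exact Ideal.subset_span ⟨f, g, hf, hg, rfl⟩
    obtain ⟨i, j, hij, hne⟩ := Function.not_injective_iff.mp hg
    rw [Matrix.det_zero_of_column_eq hne (by simp [hij])]
    exact zero_mem _
  obtain ⟨i, j, hij, hne⟩ := Function.not_injective_iff.mp hf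
  rw [Matrix.det_zero_of_row_eq hne (by ext; simp [hij])]
  exact zero_mem _

lemma minorsIdeal_eq_top_of_mul_mul_eq_one {p q : ℕ} (A : Matrix (Fin p) (Fin q) R) (s : ℤ)
    (V : Matrix (Fin s.toNat) (Fin p) R) (U : Matrix (Fin q) (Fin s.toNat) R)
    (h : V * A * U = 1) : minorsIdeal A s = ⊤ := by
  rcases le_or_gt s 0 with hs | hs
  · exact if_pos hs
  rw [Ideal.eq_top_iff_one, ← Matrix.det_one (n := Fin s.toNat), ← h, Matrix.mul_assoc]
  refine Ideal.span_le.mpr ?_ (Matrix.det_mul_mem_span_det_submatrix V (A * U))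
  rintro _ ⟨f, rfl⟩
  dsimp only
  rw [Matrix.submatrix_mul A U f id id Function.bijective_id, Matrix.submatrix_id_id,
    ← Matrix.det_transpose, Matrix.transpose_mul]
  refine Ideal.span_le.mpr ?_ (Matrix.det_mul_mem_span_det_submatrix _ _)
  rintro _ ⟨g, rfl⟩
  dsimp only
  rw [show (A.submatrix f id)ᵀ.submatrix g id = (A.submatrix f g)ᵀ from rfl, Matrix.det_transpose]
  exact det_submatrix_mem_minorsIdeal A hs f g

lemma minorsIdeal_map_le {S : Type} [CommRing S] (φ : R →+* S) {p q : ℕ}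
    (A : Matrix (Fin p) (Fin q) R) (s : ℤ) :
    minorsIdeal (A.map φ) s ≤ (minorsIdeal A s).map φ := by
  unfold minorsIdeal
  split_ifs
  · rw [Ideal.map_top]
  · rw [Ideal.map_top]
  rw [Ideal.span_le]
  rintro _ ⟨f, g, hf, hg, rfl⟩
  rw [show (A.map φ).submatrix f g = φ.mapMatrix (A.submatrix f g) from rfl, ← RingHom.map_det]
  exact Ideal.mem_map_of_mem φ (Ideal.subset_span ⟨f, g, hf, hg, rfl⟩)

end Minors

namespace FinFreeComplex

variable {R : Type} [CommRing R] (F : FinFreeComplex R)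

lemma moduleDimE_homologyAt_le (m : ℤ) :
    moduleDimE R (F.homologyAt m) ≤ F.dim + ((m : ℝ) : EReal) := by
  rw [← EReal.sub_le_iff_le_add (.inl (EReal.coe_ne_bot _)) (.inl (EReal.coe_ne_top _))]
  exact le_iSup (fun k : ℤ => moduleDimE R (F.homologyAt k) - ((k : ℝ) : EReal)) m

lemma s_eq_sum_Icc (m : ℤ) :
    F.s m = ∑ i ∈ Finset.Icc F.a m, (-1 : ℤ) ^ (m - i).toNat * (F.rank i : ℤ) := by
  refine finsum_mem_eq_sum_of_inter_support_eq _ (Set.ext fun i => ?_)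
  simp only [Set.mem_inter_iff, Set.mem_Iic, Function.mem_support, Finset.coe_Icc, Set.mem_Icc]
  refine ⟨fun ⟨him, hi⟩ => ⟨⟨?_, him⟩, hi⟩, fun ⟨⟨_, him⟩, hi⟩ => ⟨him, hi⟩⟩
  by_contra hia
  exact hi (by simp [F.rank_eq_zero i (.inl (not_le.mp hia))])

lemma s_succ (m : ℤ) : F.s (m + 1) = F.rank (m + 1) - F.s m := by
  rcases lt_or_ge (m + 1) F.a with hm | hm
  · simp [s_eq_sum_Icc, Finset.Icc_eq_empty_of_lt, hm, hm.trans' (lt_add_one m),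
      F.rank_eq_zero (m + 1) (.inl hm)]
  rw [s_eq_sum_Icc, s_eq_sum_Icc, ← Finset.insert_Icc_right_eq_Icc_add_one hm,
    Finset.sum_insert (by simp), sub_self, Int.toNat_zero, pow_zero, one_mul, sub_eq_add_neg,
    ← Finset.sum_neg_distrib]
  refine congrArg _ (Finset.sum_congr rfl fun i hi => ?_)
  rw [show (m + 1 - i).toNat = (m - i).toNat + 1 by simp at hi; omega, pow_succ]
  ring

lemma s_eq_zero_of_lt {m : ℤ} (hm : m < F.a) : F.s m = 0 := by
  simp [s_eq_sum_Icc, hm]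

def map {S : Type} [CommRing S] (φ : R →+* S) : FinFreeComplex S where
  a := F.a
  b := F.b
  rank := F.rank
  d n := (F.d n).map φ
  rank_eq_zero := F.rank_eq_zero
  d_comp_d n := by rw [← Matrix.map_mul, F.d_comp_d, Matrix.map_zero _ (map_zero φ)]

lemma range_d_le_ker (k : ℤ) :
    LinearMap.range (F.d (k + 1)).mulVecLin ≤ LinearMap.ker (F.d k).mulVecLin := by
  rintro _ ⟨y, rfl⟩
  simp [Matrix.mulVec_mulVec, F.d_comp_d]

lemma smul_mem_range_d_of_mem_annihilator {k : ℤ} {t : R}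
    (ht : t ∈ Module.annihilator R (F.homologyAt (k + 1))) {y : Fin (F.rank (k + 1)) → R}
    (hy : y ∈ LinearMap.ker (F.d k).mulVecLin) :
    t • y ∈ LinearMap.range (F.d (k + 1)).mulVecLin := by
  -- `homologyAt (k + 1)` is phrased with `d (k + 1 - 1)`, whose index cannot be rewritten alone.
  have key : ∀ y ∈ LinearMap.ker (F.d (k + 1 - 1)).mulVecLin,
      t • y ∈ LinearMap.range (F.d (k + 1 - 1 + 1)).mulVecLin :=
    fun _ => Submodule.smul_mem_of_mem_annihilator_quotient ht
  rw [Int.add_sub_cancel] at key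
  exact key y hy

def ImageSplits (k : ℤ) : Prop :=
  (∃ C, IsCompl (LinearMap.range (F.d k).mulVecLin) C) ∧
    (Module.finrank R (LinearMap.range (F.d k).mulVecLin) : ℤ) = F.s k

section LocalRing

open LinearMap Module

attribute [local instance] Module.free_of_flat_of_isLocalRing

variable {A : Type} [CommRing A] [IsLocalRing A] (G : FinFreeComplex A)

lemma imageSplits_of_lt {k : ℤ} (hk : k < G.a) : G.ImageSplits k := by
  have : IsEmpty (Fin (G.rank k)) := by
    rw [G.rank_eq_zero k (.inl hk)]
    infer_instance
  refine ⟨⟨⊥, ?_⟩, ?_⟩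
  · rw [Subsingleton.elim (range (G.d k).mulVecLin) ⊤]
    exact isCompl_top_bot
  · rw [finrank_zero_of_subsingleton, G.s_eq_zero_of_lt hk, Nat.cast_zero]

lemma ImageSplits.succ {k : ℤ} (hk : G.ImageSplits k)
    (hexact : ker (G.d k).mulVecLin ≤ range (G.d (k + 1)).mulVecLin) :
    G.ImageSplits (k + 1) := by
  obtain ⟨⟨C, hC⟩, hrank⟩ := hk
  have := Submodule.projective_of_isCompl hC
  rw [ImageSplits, (G.range_d_le_ker k).antisymm hexact]
  obtain ⟨D, hD⟩ := (G.d k).mulVecLin.exists_isCompl_ker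
  refine ⟨⟨D, hD.symm⟩, ?_⟩
  have := (G.d k).mulVecLin.finrank_ker_add_finrank_range
  rw [finrank_fin_fun] at this
  rw [G.s_succ]
  omega

lemma imageSplits_of_exact {n : ℤ}
    (hexact : ∀ k < n, ker (G.d k).mulVecLin ≤ range (G.d (k + 1)).mulVecLin) {k : ℤ}
    (hkn : k ≤ n) : G.ImageSplits k := by
  rcases lt_or_ge k G.a with hk | hk
  · exact G.imageSplits_of_lt hk
  obtain hk' : G.a - 1 ≤ k := by omega
  clear hk
  induction k, hk' using Int.leInduction with
  | base => exact G.imageSplits_of_lt (by omega)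
  | succ k _ ih => exact (ih (by omega)).succ G (hexact k (by omega))

theorem minorsIdeal_eq_top_of_exact (n : ℤ)
    (hexact : ∀ k < n, ker (G.d k).mulVecLin ≤ range (G.d (k + 1)).mulVecLin) :
    minorsIdeal (G.d n) (G.s n) = ⊤ := by
  obtain ⟨⟨C, hC⟩, hrank⟩ := G.imageSplits_of_exact hexact le_rfl
  have := Submodule.projective_of_isCompl hC
  obtain ⟨V, U, hVU⟩ :=
    Matrix.exists_mul_mul_eq_one_of_isCompl (k := (G.s n).toNat) _ hC (by omega)
  exact minorsIdeal_eq_top_of_mul_mul_eq_one _ _ V U hVU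

end LocalRing

theorem exists_annihilator_homologyAt_le (n : ℤ) (P : Ideal R) [P.IsPrime]
    (hP : minorsIdeal (F.d n) (F.s n) ≤ P) :
    ∃ m ≤ n, Module.annihilator R (F.homologyAt m) ≤ P := by
  by_contra! h
  let φ := algebraMap R (Localization.AtPrime P)
  have hexact : ∀ k < n, LinearMap.ker ((F.map φ).d k).mulVecLin ≤
      LinearMap.range ((F.map φ).d (k + 1)).mulVecLin := by
    intro k hk
    obtain ⟨t, ht, htP⟩ := SetLike.not_le_iff_exists.mp (h (k + 1) hk)
    exact IsLocalization.ker_mulVecLin_map_le_range P.primeCompl _ _ htP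
      fun y hy => F.smul_mem_range_d_of_mem_annihilator ht hy
  apply (IsLocalRing.maximalIdeal.isMaximal (Localization.AtPrime P)).ne_top
  rw [← Localization.AtPrime.map_eq_maximalIdeal, eq_top_iff,
    ← (F.map φ).minorsIdeal_eq_top_of_exact n hexact]
  exact (minorsIdeal_map_le φ _ _).trans (Ideal.map_mono hP)

end FinFreeComplex

theorem FinFreeComplex.dim_quotient_minors_le_general (R : Type) [CommRing R]
    (F : FinFreeComplex R) (n : ℤ) :
    krullDimToEReal (ringKrullDim (R ⧸ minorsIdeal (F.d n) (F.s n)))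
      ≤ F.dim + ((n : ℝ) : EReal) := by
  refine krullDimToEReal_ringKrullDim_quotient_le fun P hP => ?_
  obtain ⟨m, hmn, hm⟩ := F.exists_annihilator_homologyAt_le n P.asIdeal hP
  refine ⟨_, hm, (F.moduleDimE_homologyAt_le m).trans ?_⟩
  gcongr

/-- For every integer `n` with `a ≤ n ≤ b` one has
`dim (R / I_{s_n}(∂_{n+1})) ≤ dim_R F + n`. -/
theorem FinFreeComplex.dim_quotient_minors_le (R : Type) [CommRing R] [IsNoetherianRing R]
    (F : FinFreeComplex R) (n : ℤ) (han : F.a ≤ n) (hnb : n ≤ F.b) :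
    krullDimToEReal (ringKrullDim (R ⧸ minorsIdeal (F.d n) (F.s n)))
      ≤ F.dim + ((n : ℝ) : EReal) :=
  FinFreeComplex.dim_quotient_minors_le_general R F n
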